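/- Let L ∈ ℝ^{N×N} be a symmetric positive semidefinite matrix whose kernel is spanned by the all-ones vector 𝟙, and let W₁,…,W_N be matrices (W_i ∈ ℝ^{n×w_i}) each with orthonormal columns such that the intersection of the column spaces ∩_{i=1}^N Im(W_i) = {0}. Then the block matrix Wᵀ(L ⊗ I_n)W, with W = diag(W₁,…,W_N), is positive definite. -/

import Mathlib

/-!
`L ⊗ I` is positive semidefinite, hence so is `Wᵀ (L ⊗ I) W`, and its quadratic form vanishes at
`x` only if `(L ⊗ I) (W x) = 0`. Since `ker L` consists of the constant vectors, the `N` blocks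
`Wᵢ xᵢ` of `W x` then coincide, so their common value lies in every `Im Wᵢ` and is `0`; orthonormal
columns make each `Wᵢ` injective, so `x = 0`.
-/

namespace Matrix

open scoped Kronecker ComplexOrder

theorem PosSemidef.posDef_conjTranspose_mul_mul {𝕜 m n : Type*} [RCLike 𝕜] [Fintype m]
    [Fintype n] {A : Matrix m m 𝕜} (hA : A.PosSemidef) {B : Matrix m n 𝕜}
    (hB : ∀ x, A *ᵥ (B *ᵥ x) = 0 → x = 0) : (Bᴴ * A * B).PosDef := by
  have hM := hA.conjTranspose_mul_mul_same B
  refine posDef_iff_dotProduct_mulVec.2 ⟨hM.isHermitian, fun x hx => ?_⟩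
  refine lt_of_le_of_ne (hM.dotProduct_mulVec_nonneg x) fun h => hx (hB x ?_)
  have hform : star x ⬝ᵥ (Bᴴ * A * B) *ᵥ x = star (B *ᵥ x) ⬝ᵥ A *ᵥ B *ᵥ x := by
    rw [← mulVec_mulVec, ← mulVec_mulVec, dotProduct_mulVec, ← star_mulVec]
  exact (hA.dotProduct_mulVec_zero_iff _).1 (hform ▸ h.symm)

theorem kronecker_one_mulVec_apply {R ι m : Type*} [CommSemiring R] [Fintype ι] [Fintype m]
    [DecidableEq m] (L : Matrix ι ι R) (v : ι × m → R) (i : ι) (k : m) :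
    (L ⊗ₖ (1 : Matrix m m R) *ᵥ v) (i, k) = (L *ᵥ fun j => v (j, k)) i := by
  simp only [mulVec, dotProduct, kroneckerMap_apply, one_apply, mul_ite, mul_one, mul_zero,
    ite_mul, zero_mul, Fintype.sum_prod_type, Finset.sum_ite_eq, Finset.mem_univ, ↓reduceIte]

theorem eq_of_kronecker_one_mulVec_eq_zero {R ι m : Type*} [CommRing R] [Fintype ι]
    [Fintype m] [DecidableEq m] {L : Matrix ι ι R}
    (hker : LinearMap.ker L.mulVecLin = Submodule.span R {fun _ => 1}) {v : ι × m → R}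
    (hv : L ⊗ₖ (1 : Matrix m m R) *ᵥ v = 0) (i j : ι) (k : m) : v (i, k) = v (j, k) := by
  have hmem : (fun j => v (j, k)) ∈ LinearMap.ker L.mulVecLin := by
    ext i'
    simpa [kronecker_one_mulVec_apply] using congrFun hv (i', k)
  obtain ⟨r, hr⟩ := Submodule.mem_span_singleton.1 (hker ▸ hmem)
  exact (congrFun hr i).symm.trans (congrFun hr j)

theorem mulVec_apply_of_eq_blockDiagonal {R ι m : Type*} {n : ι → Type*} [CommSemiring R]
    [Fintype ι] [DecidableEq ι] [∀ i, Fintype (n i)] {B : ∀ i, Matrix m (n i) R}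
    {W : Matrix (ι × m) (Σ i, n i) R}
    (hW : ∀ i r j c, W (i, r) ⟨j, c⟩ = if i = j then B j r c else 0) (x : (Σ i, n i) → R)
    (i : ι) (r : m) : (W *ᵥ x) (i, r) = (B i *ᵥ fun c => x ⟨i, c⟩) r := by
  simp only [mulVec, dotProduct, ← Finset.univ_sigma_univ, Finset.sum_sigma, hW, ite_mul,
    zero_mul, Finset.sum_ite_irrel, Finset.sum_const_zero, Finset.sum_ite_eq, Finset.mem_univ,
    ↓reduceIte]

theorem eq_zero_of_mulVec_eq_zero_of_transpose_mul_self_eq_one {R m n : Type*} [CommSemiring R]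
    [Fintype m] [Fintype n] [DecidableEq n] {B : Matrix m n R} (hB : Bᵀ * B = 1) {x : n → R} (hx : B *ᵥ x = 0) :
    x = 0 := by
  simpa [mulVec_mulVec, hB] using congrArg (Bᵀ *ᵥ ·) hx

end Matrix

open Matrix

theorem stmt6_general {N n : ℕ} (w : Fin N → ℕ)
    (L : Matrix (Fin N) (Fin N) ℝ)
    (hLpsd : L.PosSemidef)
    (hker : LinearMap.ker L.mulVecLin = Submodule.span ℝ {fun _ => (1 : ℝ)})
    (Ws : (i : Fin N) → Matrix (Fin n) (Fin (w i)) ℝ)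
    (horth : ∀ i, (Ws i)ᵀ * Ws i = 1)
    (hjoint : ⨅ i, LinearMap.range (Ws i).mulVecLin = ⊥)
    (W : Matrix (Fin N × Fin n) ((i : Fin N) × Fin (w i)) ℝ)
    (hW : ∀ i r j c, W (i, r) ⟨j, c⟩ = if i = j then Ws j r c else 0) :
    (Wᵀ * (kroneckerMap (· * ·) L (1 : Matrix (Fin n) (Fin n) ℝ)) * W).PosDef := by
  rw [← conjTranspose_eq_transpose_of_trivial]
  refine (hLpsd.kronecker PosSemidef.one).posDef_conjTranspose_mul_mul fun x hx => ?_
  have hblocks_eq := eq_of_kronecker_one_mulVec_eq_zero hker hx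
  ext ⟨i, c⟩
  have hcommon : Ws i *ᵥ (fun c => x ⟨i, c⟩) ∈ ⨅ j, LinearMap.range (Ws j).mulVecLin :=
    Submodule.mem_iInf _ |>.2 fun j => ⟨fun c => x ⟨j, c⟩, by
      ext r
      simp only [mulVecLin_apply, ← mulVec_apply_of_eq_blockDiagonal hW, hblocks_eq i j]⟩
  rw [hjoint, Submodule.mem_bot] at hcommon
  exact congrFun (eq_zero_of_mulVec_eq_zero_of_transpose_mul_self_eq_one (horth i) hcommon) c

/-- If L ∈ ℝ^{N×N} is symmetric PSD with kernel spanned by the all-ones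
vector, and W₁,…,W_N have orthonormal columns with ∩ᵢ Im(Wᵢ) = {0}, then
Wᵀ(L ⊗ Iₙ)W is positive definite, where W = blockdiag(W₁,…,W_N). -/
theorem stmt6 {N n : ℕ} (w : Fin N → ℕ)
    (L : Matrix (Fin N) (Fin N) ℝ)
    (hLsymm : L.IsSymm) (hLpsd : L.PosSemidef)
    (hker : LinearMap.ker L.mulVecLin = Submodule.span ℝ {fun _ => (1 : ℝ)})
    (Ws : (i : Fin N) → Matrix (Fin n) (Fin (w i)) ℝ)
    (horth : ∀ i, (Ws i)ᵀ * Ws i = 1)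
    (hjoint : ⨅ i, LinearMap.range (Ws i).mulVecLin = ⊥)
    (W : Matrix (Fin N × Fin n) ((i : Fin N) × Fin (w i)) ℝ)
    (hW : ∀ i r j c, W (i, r) ⟨j, c⟩ = if i = j then Ws j r c else 0) :
    (Wᵀ * (kroneckerMap (· * ·) L (1 : Matrix (Fin n) (Fin n) ℝ)) * W).PosDef :=
  stmt6_general w L hLpsd hker Ws horth hjoint W hW
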